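/- (Proposition 3, exact-regression form: convergence and non-strict monotonicity.) Let N ≥ 1, let φ : ℝ → ℝ^N be bounded and continuous, let θ ∈ ℝ^N, and let y(t) = φ(t)ᵀ θ for all t ∈ ℝ. Let d_1,…,d_{N−1} > 0 be pairwise distinct, define Φ_e(t) ∈ ℝ^{N×N} with first row φ(t)ᵀ and (j+1)-th row φ(t−d_j)ᵀ, Y_e(t) = (y(t), y(t−d_1),…,y(t−d_{N−1}))ᵀ, ψ_φ(t) = det Φ_e(t), and Y(t) = adj(Φ_e(t)) Y_e(t). Let γ_1,…,γ_N > 0 and let θ̂ : ℝ → ℝ^N be differentiable on [0,∞) with θ̂_i'(t) = γ_i ψ_φ(t) (Y_i(t) − ψ_φ(t) θ̂_i(t)) for all t ≥ 0. If ∫_0^t ψ_φ(s)² ds → ∞ as t → ∞, then for every i = 1,…,N: (a) θ̂_i(t) → θ_i as t → ∞; (b) θ̂_i is monotone on [0,∞); and (c) t ↦ |θ̂_i(t) − θ_i| is non-increasing on [0,∞). -/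

import Mathlib

/-!
Since `y = φᵀθ`, the extended regression is `Y_e = Φ_e θ`, so mixing with the adjugate gives
`Y = adj Φ_e · Φ_e θ = ψ_φ θ`. Each estimator component therefore obeys the scalar linear
relaxation `θ̂_i' = γ_i ψ_φ² (θ_i − θ̂_i)`, whose solution is
`θ̂_i(t) = θ_i + (θ̂_i(0) − θ_i) exp(−γ_i ∫_0^t ψ_φ²)`. The exponent is non-increasing in `t`
and tends to `−∞`, which gives all three claims.
-/

open Real Filter Topology Set
open scoped Matrix

theorem Matrix.adjugate_mulVec_mulVec {n R : Type*} [Fintype n] [DecidableEq n] [CommRing R]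
    (A : Matrix n n R) (v : n → R) : A.adjugate *ᵥ (A *ᵥ v) = A.det • v := by
  rw [Matrix.mulVec_mulVec, Matrix.adjugate_mul, Matrix.smul_mulVec, Matrix.one_mulVec]

section LinearRelaxation

variable {a x : ℝ → ℝ} {c : ℝ}

theorem monotone_integral_of_nonneg (ha : Continuous a) (ha0 : ∀ t, 0 ≤ a t) :
    Monotone fun t => ∫ s in (0 : ℝ)..t, a s :=
  monotone_of_deriv_nonneg
    (fun t => (ha.integral_hasStrictDerivAt 0 t).hasDerivAt.differentiableAt)
    fun t => (ha.deriv_integral a 0 t).symm ▸ ha0 t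

theorem eq_add_mul_exp_neg_integral_of_hasDerivAt (ha : Continuous a)
    (hx : ∀ t ≥ 0, HasDerivAt x (a t * (c - x t)) t) {t : ℝ} (ht : 0 ≤ t) :
    x t = c + (x 0 - c) * exp (-∫ s in (0 : ℝ)..t, a s) := by
  set A : ℝ → ℝ := fun t => ∫ s in (0 : ℝ)..t, a s
  -- `(x - c) · exp A` is a first integral of the equation.
  set E : ℝ → ℝ := fun s => (x s - c) * exp (A s)
  have hE : ∀ s ≥ 0, HasDerivAt E 0 s := fun s hs => by
    have hA : HasDerivAt A (a s) s := (ha.integral_hasStrictDerivAt 0 s).hasDerivAt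
    exact (((hx s hs).sub_const c).mul hA.exp).congr_deriv (by ring)
  have hE_const : E t = E 0 :=
    constant_of_has_deriv_right_zero
      (fun s hs => (hE s hs.1).continuousAt.continuousWithinAt)
      (fun s hs => (hE s hs.1).hasDerivWithinAt) t (right_mem_Icc.mpr ht)
  have hA0 : A 0 = 0 := intervalIntegral.integral_same
  simp only [E, hA0, exp_zero, mul_one] at hE_const
  rw [← hE_const, exp_neg, mul_assoc, mul_inv_cancel₀ (exp_ne_zero _), mul_one,
    add_sub_cancel]

theorem tendsto_of_hasDerivAt_mul_sub (ha : Continuous a)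
    (hx : ∀ t ≥ 0, HasDerivAt x (a t * (c - x t)) t)
    (hA : Tendsto (fun t => ∫ s in (0 : ℝ)..t, a s) atTop atTop) :
    Tendsto x atTop (𝓝 c) := by
  have hlim : Tendsto (fun t => c + (x 0 - c) * exp (-∫ s in (0 : ℝ)..t, a s)) atTop
      (𝓝 (c + (x 0 - c) * 0)) :=
    ((tendsto_exp_atBot.comp (tendsto_neg_atTop_atBot.comp hA)).const_mul _).const_add c
  rw [mul_zero, add_zero] at hlim
  refine hlim.congr' ?_
  filter_upwards [eventually_ge_atTop 0] with t ht
  exact (eq_add_mul_exp_neg_integral_of_hasDerivAt ha hx ht).symm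

theorem monotoneOn_or_antitoneOn_of_hasDerivAt_mul_sub (ha : Continuous a)
    (hx : ∀ t ≥ 0, HasDerivAt x (a t * (c - x t)) t)
    (ha0 : ∀ t, 0 ≤ a t) :
    MonotoneOn x (Ici 0) ∨ AntitoneOn x (Ici 0) := by
  have hsol : EqOn (fun t => c + (x 0 - c) * exp (-∫ s in (0 : ℝ)..t, a s)) x (Ici 0) :=
    fun t ht => (eq_add_mul_exp_neg_integral_of_hasDerivAt ha hx ht).symm
  have hexp : Antitone fun t => exp (-∫ s in (0 : ℝ)..t, a s) :=
    fun s t hst => exp_le_exp.mpr (neg_le_neg (monotone_integral_of_nonneg ha ha0 hst))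
  rcases le_total 0 (x 0 - c) with hc | hc
  · exact .inr (((hexp.const_mul hc).const_add c).antitoneOn _ |>.congr hsol)
  · exact .inl (((hexp.const_mul_of_nonpos hc).const_add c).monotoneOn _ |>.congr hsol)

theorem antitoneOn_abs_sub_of_hasDerivAt_mul_sub (ha : Continuous a)
    (hx : ∀ t ≥ 0, HasDerivAt x (a t * (c - x t)) t)
    (ha0 : ∀ t, 0 ≤ a t) :
    AntitoneOn (fun t => |x t - c|) (Ici 0) := by
  intro s hs t ht hst
  simp only [eq_add_mul_exp_neg_integral_of_hasDerivAt ha hx hs,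
    eq_add_mul_exp_neg_integral_of_hasDerivAt ha hx ht, add_sub_cancel_left, abs_mul, abs_exp]
  gcongr
  exact monotone_integral_of_nonneg ha ha0 hst

end LinearRelaxation

/-- Proposition 3, exact-regression form: for the DREM estimator
built from the exact regression `y = φᵀθ` with `N-1` delay operators, if
`∫_0^t ψ_φ² → ∞` then each `θ̂_i → θ_i`, each `θ̂_i` is monotone on `[0,∞)`,
and `|θ̂_i - θ_i|` is non-increasing on `[0,∞)`. -/
theorem statement12 (N : ℕ)
    (φ : ℝ → Fin N → ℝ) (hφ_cont : Continuous φ)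
    (θ : Fin N → ℝ)
    (y : ℝ → ℝ) (hy : ∀ t, y t = ∑ j, φ t j * θ j)
    (d : Fin (N - 1) → ℝ)
    (Φe : ℝ → Matrix (Fin N) (Fin N) ℝ)
    (hΦe : ∀ t (i j : Fin N), Φe t i j =
      if h : (i : ℕ) = 0 then φ t j else φ (t - d ⟨(i : ℕ) - 1, by omega⟩) j)
    (Ye : ℝ → Fin N → ℝ)
    (hYe : ∀ t (i : Fin N), Ye t i =
      if h : (i : ℕ) = 0 then y t else y (t - d ⟨(i : ℕ) - 1, by omega⟩))
    (ψφ : ℝ → ℝ) (hψφ : ∀ t, ψφ t = (Φe t).det)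
    (Y : ℝ → Fin N → ℝ) (hY : ∀ t, Y t = (Φe t).adjugate.mulVec (Ye t))
    (γ : Fin N → ℝ) (hγ : ∀ i, γ i > 0)
    (θhat : ℝ → Fin N → ℝ)
    (hθhat : ∀ t ≥ (0 : ℝ), ∀ i : Fin N,
      HasDerivAt (fun s => θhat s i) (γ i * ψφ t * (Y t i - ψφ t * θhat t i)) t)
    (hL2 : Filter.Tendsto (fun t => ∫ s in (0 : ℝ)..t, (ψφ s) ^ 2)
      Filter.atTop Filter.atTop) :
    ∀ i : Fin N,
      Filter.Tendsto (fun t => θhat t i) Filter.atTop (nhds (θ i)) ∧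
      (MonotoneOn (fun t => θhat t i) (Set.Ici 0) ∨
        AntitoneOn (fun t => θhat t i) (Set.Ici 0)) ∧
      AntitoneOn (fun t => |θhat t i - θ i|) (Set.Ici 0) := by
  intro i
  have hYe_eq : ∀ t, Ye t = Φe t *ᵥ θ := fun t => by
    funext k
    simp only [hYe, hy, Matrix.mulVec, dotProduct, hΦe]
    split_ifs <;> rfl
  have hY_eq : ∀ t, Y t i = ψφ t * θ i := fun t => by
    rw [hY, hYe_eq, Matrix.adjugate_mulVec_mulVec, hψφ, Pi.smul_apply, smul_eq_mul]
  have hψ_cont : Continuous ψφ := by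
    rw [funext hψφ]
    refine Continuous.matrix_det (continuous_matrix fun k j => ?_)
    simp only [hΦe]
    split_ifs <;> fun_prop
  have ha : Continuous fun t => γ i * ψφ t ^ 2 := by fun_prop
  have ha0 : ∀ t, 0 ≤ γ i * ψφ t ^ 2 := fun t => mul_nonneg (hγ i).le (sq_nonneg _)
  have hx : ∀ t ≥ 0, HasDerivAt (fun s => θhat s i) (γ i * ψφ t ^ 2 * (θ i - θhat t i)) t :=
    fun t ht => (hθhat t ht i).congr_deriv (by rw [hY_eq]; ring)
  have hA : Tendsto (fun t => ∫ s in (0 : ℝ)..t, γ i * ψφ s ^ 2) atTop atTop := by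
    simpa only [intervalIntegral.integral_const_mul] using hL2.const_mul_atTop (hγ i)
  exact ⟨tendsto_of_hasDerivAt_mul_sub ha hx hA,
    monotoneOn_or_antitoneOn_of_hasDerivAt_mul_sub ha hx ha0,
    antitoneOn_abs_sub_of_hasDerivAt_mul_sub ha hx ha0⟩
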